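/- (Generalized Walsh theorem, part 2) Let D ⊆ ℂ be a circular domain, let q be a monic complex polynomial of degree d ≥ 1, and let f be a complex polynomial of degree exactly n ≥ 1 that does not vanish at any point of q(D). Then T_{q,n}(f) does not vanish at any point of q_∘(D), and S_{q,n}(f)(u₁,…,uₙ) ≠ 0 for all (u₁,…,uₙ) ∈ (q_∘(D))ⁿ. -/

import Mathlib

open Polynomial

/-- The apolarity form `[f,g]_m`. -/
noncomputable def apol (m : ℕ) (f g : Polynomial ℂ) : ℂ :=
  ∑ k ∈ Finset.range (m + 1),
    (-1 : ℂ) ^ k * ((m.choose k : ℂ))⁻¹ * f.coeff k * g.coeff (m - k)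

/-- The symmetrization `Sym_N(f)` of a polynomial, as a function on `ι → ℂ`
with `N = card ι`. -/
noncomputable def symFun {ι : Type*} [Fintype ι] (f : Polynomial ℂ) (y : ι → ℂ) : ℂ :=
  ∑ k ∈ Finset.range (Fintype.card ι + 1),
    (((Fintype.card ι).choose k : ℂ))⁻¹ * f.coeff k *
      MvPolynomial.eval y (MvPolynomial.esymm ι ℂ k)

/-- A circular domain: an open or closed disk or half-plane, or a complement thereof. -/
def IsCircularDomain (D : Set ℂ) : Prop :=
  ∃ (α γ : ℝ) (β : ℂ),
    D = {z : ℂ | α * Complex.normSq z + ((starRingEnd ℂ) β * z).re + γ < 0} ∨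
    D = {z : ℂ | α * Complex.normSq z + ((starRingEnd ℂ) β * z).re + γ ≤ 0}

/-- `q_∘(D) = {u : q⁻¹(u) ⊆ D}`. -/
def innerImage (q : Polynomial ℂ) (D : Set ℂ) : Set ℂ :=
  {u : ℂ | ∀ z : ℂ, q.eval z = u → z ∈ D}

/-- `S_{q,n}(f)(u₁,…,uₙ) = [f∘q, ∏ⱼ (q - uⱼ)]_{nd}`. -/
noncomputable def Sfun (q : Polynomial ℂ) (n : ℕ) (f : Polynomial ℂ) (u : Fin n → ℂ) : ℂ :=
  apol (n * q.natDegree) (f.comp q) (∏ j, (q - Polynomial.C (u j)))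

/-- The Fischer inner product `⟨f,g⟩_n`. -/
noncomputable def fischer (n : ℕ) (f g : Polynomial ℂ) : ℂ :=
  ∑ k ∈ Finset.range (n + 1),
    ((n.choose k : ℂ))⁻¹ * f.coeff k * (starRingEnd ℂ) (g.coeff k)

/-!
Both `f ∘ q` and `∏ⱼ (q - uⱼ)` have degree `n d`; the zeros of the first avoid `D` and those of
the second lie in `D`, so by Grace's theorem for circular regions their apolar form is nonzero.
Grace's theorem goes by induction on the degree. Splitting off a zero `ζ ∉ K` of `Q` turns
`[P, Q]_m` into a multiple of `[D_ζ P, Q / (X - ζ)]_{m-1}`, where `D_ζ P = m P + (ζ - X) P'` is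
the polar derivative. When `K` is convex, `D_ζ P` again has degree `m - 1` (otherwise `ζ` would
be the centroid of the zeros of `P`), and Laguerre's theorem keeps its zeros in `K`: at a zero
`w ∉ K` of `D_ζ P`, the point `1 / (w - ζ)` is the centroid of the points `1 / (w - zᵢ)`, and the
inversion `z ↦ 1 / (w - z)` carries `K` into a convex circular region. When `K` is not convex,
its complement is, and the apolar form is symmetric up to sign.
-/

open ComplexConjugate

theorem Convex.inv_card_smul_sum_mem {E : Type*} [AddCommGroup E] [Module ℝ E] {K : Set E}
    (hK : Convex ℝ K) {s : Multiset E} (hs : s ≠ 0) (h : ∀ z ∈ s, z ∈ K) :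
    (Multiset.card s : ℝ)⁻¹ • s.sum ∈ K := by
  classical
  have hmem := hK.centerMass_mem (t := s.toFinset) (w := fun z => (s.count z : ℝ)) (z := id)
    (fun _ _ => Nat.cast_nonneg _)
    (by
      rw [← Nat.cast_sum, Multiset.toFinset_sum_count_eq]
      exact_mod_cast Multiset.card_pos.mpr hs)
    (fun z hz => h z (Multiset.mem_toFinset.mp hz))
  rw [Finset.centerMass, ← Nat.cast_sum, Multiset.toFinset_sum_count_eq, Finset.sum_congr rfl
    fun z _ => Nat.cast_smul_eq_nsmul ℝ _ (id z)] at hmem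
  simpa only [id, ← Finset.sum_multiset_count] using hmem

def circQuad (α : ℝ) (β : ℂ) (γ : ℝ) (z : ℂ) : ℝ :=
  α * Complex.normSq z + (conj β * z).re + γ

def circRegion (α : ℝ) (β : ℂ) (γ : ℝ) (strict : Bool) : Set ℂ :=
  if strict then {z | circQuad α β γ z < 0} else {z | circQuad α β γ z ≤ 0}

theorem IsCircularDomain.exists_eq_circRegion {D : Set ℂ} (hD : IsCircularDomain D) :
    ∃ α β γ b, D = circRegion α β γ b := by
  obtain ⟨α, γ, β, rfl | rfl⟩ := hD
  exacts [⟨α, β, γ, true, rfl⟩, ⟨α, β, γ, false, rfl⟩]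

theorem circQuad_neg (α : ℝ) (β : ℂ) (γ : ℝ) (z : ℂ) :
    circQuad (-α) (-β) (-γ) z = -circQuad α β γ z := by
  simp only [circQuad, map_neg, neg_mul, Complex.neg_re]
  ring

theorem compl_circRegion (α : ℝ) (β : ℂ) (γ : ℝ) (b : Bool) :
    (circRegion α β γ b)ᶜ = circRegion (-α) (-β) (-γ) (!b) := by
  ext z
  cases b <;> simp [circRegion, circQuad_neg]

theorem circQuad_nonneg_of_notMem {α : ℝ} {β : ℂ} {γ : ℝ} {b : Bool} {z : ℂ}
    (hz : z ∉ circRegion α β γ b) : 0 ≤ circQuad α β γ z := by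
  cases b <;> simp [circRegion] at hz <;> linarith

theorem mem_circRegion_iff_of_pos {α α' : ℝ} {β β' : ℂ} {γ γ' : ℝ} {b : Bool} {z z' : ℂ} {c : ℝ}
    (hc : 0 < c) (h : circQuad α' β' γ' z' = c * circQuad α β γ z) :
    z' ∈ circRegion α' β' γ' b ↔ z ∈ circRegion α β γ b := by
  cases b <;> simp [circRegion, h, mul_neg_iff, mul_nonpos_iff, hc, hc.not_gt, hc.le]

theorem convexOn_circQuad {α : ℝ} (hα : 0 ≤ α) (β : ℂ) (γ : ℝ) :
    ConvexOn ℝ Set.univ (circQuad α β γ) := by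
  have hsq : ConvexOn ℝ Set.univ Complex.normSq := by
    have h := (convexOn_univ_norm (E := ℂ)).pow (fun z _ => norm_nonneg z) 2
    rwa [show (norm ^ 2 : ℂ → ℝ) = Complex.normSq from
      funext fun z => (Complex.normSq_eq_norm_sq z).symm] at h
  let lin : ℂ →ₗ[ℝ] ℝ := Complex.reLm.comp ((LinearMap.mulLeft ℝ (conj β)))
  exact ((hsq.smul hα).add (lin.convexOn convex_univ)).add_const γ

theorem convex_circRegion {α : ℝ} (hα : 0 ≤ α) (β : ℂ) (γ : ℝ) (b : Bool) :
    Convex ℝ (circRegion α β γ b) := by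
  cases b
  · simpa [circRegion] using (convexOn_circQuad hα β γ).convex_le 0
  · simpa [circRegion] using (convexOn_circQuad hα β γ).convex_lt 0

theorem circQuad_inv_sub (α : ℝ) (β : ℂ) (γ : ℝ) {w z : ℂ} (hzw : z ≠ w) :
    circQuad (circQuad α β γ w) (-conj (2 * α * w + β)) α (w - z)⁻¹
      = (Complex.normSq (w - z))⁻¹ * circQuad α β γ z := by
  obtain ⟨u, rfl⟩ : ∃ u, z = w - u := ⟨w - z, (sub_sub_cancel w z).symm⟩
  have hN : Complex.normSq u ≠ 0 := by simpa using hzw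
  rw [sub_sub_cancel]
  simp only [circQuad, map_neg, Complex.conj_conj, neg_mul, Complex.neg_re,
    Complex.mul_re, Complex.inv_re, Complex.inv_im, Complex.add_re, Complex.add_im,
    Complex.mul_im, Complex.conj_re, Complex.conj_im, Complex.ofReal_re, Complex.ofReal_im,
    Complex.normSq_apply, Complex.sub_re, Complex.sub_im, Complex.re_ofNat,
    Complex.im_ofNat] at hN ⊢
  replace hN : u.re ^ 2 + u.im ^ 2 ≠ 0 := by simpa only [sq] using hN
  field_simp
  ring

theorem inv_sub_mem_circRegion_iff {α : ℝ} {β : ℂ} {γ : ℝ} {b : Bool} {w z : ℂ} (hzw : z ≠ w) :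
    (w - z)⁻¹ ∈ circRegion (circQuad α β γ w) (-conj (2 * α * w + β)) α b ↔
      z ∈ circRegion α β γ b :=
  mem_circRegion_iff_of_pos (inv_pos.mpr (Complex.normSq_pos.mpr (sub_ne_zero.mpr hzw.symm)))
    (circQuad_inv_sub α β γ hzw)

noncomputable def polarDeriv (m : ℕ) (ζ : ℂ) (P : ℂ[X]) : ℂ[X] :=
  C (m : ℂ) * P + (C ζ - X) * derivative P

theorem coeff_polarDeriv (m : ℕ) (ζ : ℂ) (P : ℂ[X]) (k : ℕ) :
    (polarDeriv m ζ P).coeff k = (m - k) * P.coeff k + (k + 1) * ζ * P.coeff (k + 1) := by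
  rw [polarDeriv, coeff_add, coeff_C_mul, sub_mul, coeff_sub, coeff_C_mul, coeff_derivative]
  cases k with
  | zero => rw [coeff_X_mul_zero]; push_cast; ring
  | succ k => rw [coeff_X_mul, coeff_derivative]; push_cast; ring

theorem mem_circRegion_of_isRoot_polarDeriv {α : ℝ} {β : ℂ} {γ : ℝ} {b : Bool} {P : ℂ[X]}
    {ζ w : ℂ} (hP : 0 < P.natDegree) (hroots : ∀ z, P.IsRoot z → z ∈ circRegion α β γ b)
    (hζ : ζ ∉ circRegion α β γ b) (hw : (polarDeriv P.natDegree ζ P).IsRoot w) :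
    w ∈ circRegion α β γ b := by
  by_contra hwK
  have hPw : P.eval w ≠ 0 := fun h => hwK (hroots w h)
  set s := P.roots.map fun z => (w - z)⁻¹
  have hcard : (Multiset.card s : ℂ) = (w - ζ) * s.sum := by
    have hlog := (IsAlgClosed.splits P).eval_derivative_eq_eval_mul_sum hPw
    simp only [one_div] at hlog
    have hroot : (polarDeriv P.natDegree ζ P).eval w = 0 := hw
    simp only [polarDeriv, eval_add, eval_mul, eval_C, eval_sub, eval_X, hlog] at hroot
    rw [Multiset.card_map, IsAlgClosed.card_roots_eq_natDegree]
    exact mul_left_cancel₀ hPw (by linear_combination hroot)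
  have hcard0 : (Multiset.card s : ℂ) ≠ 0 := by
    rw [Multiset.card_map, IsAlgClosed.card_roots_eq_natDegree]
    exact_mod_cast hP.ne'
  have hζw : ζ ≠ w := by
    rintro rfl
    rw [sub_self, zero_mul] at hcard
    exact hcard0 hcard
  have hmean : (Multiset.card s : ℝ)⁻¹ • s.sum = (w - ζ)⁻¹ := by
    have hsum : s.sum ≠ 0 := right_ne_zero_of_mul (hcard ▸ hcard0)
    rw [Complex.real_smul, Complex.ofReal_inv, Complex.ofReal_natCast, hcard, mul_inv, mul_assoc,
      inv_mul_cancel₀ hsum, mul_one]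
  -- Inversion about `w` maps the region to a convex one, because `w` lies outside it.
  have hconv := convex_circRegion (circQuad_nonneg_of_notMem hwK) (-conj (2 * α * w + β)) α b
  have hmem := hconv.inv_card_smul_sum_mem (s := s) (fun h => hcard0 (by simp [h]))
    (by
      rintro _ hy
      obtain ⟨z, hz, rfl⟩ := Multiset.mem_map.mp hy
      have hzK := hroots z (isRoot_of_mem_roots hz)
      exact (inv_sub_mem_circRegion_iff (ne_of_mem_of_not_mem hzK hwK)).mpr hzK)
  rw [hmean, inv_sub_mem_circRegion_iff hζw] at hmem
  exact hζ hmem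

theorem degree_polarDeriv {α : ℝ} (hα : 0 ≤ α) {β : ℂ} {γ : ℝ} {b : Bool} {P : ℂ[X]} {M : ℕ}
    {ζ : ℂ} (hP : P.natDegree = M + 1) (hroots : ∀ z, P.IsRoot z → z ∈ circRegion α β γ b)
    (hζ : ζ ∉ circRegion α β γ b) : (polarDeriv (M + 1) ζ P).degree = M := by
  have hP0 : P ≠ 0 := by rintro rfl; simp at hP
  apply degree_eq_of_le_of_coeff_ne_zero
  · rw [degree_le_iff_coeff_zero]
    intro k hMk
    have hk : M + 1 ≤ k := by exact_mod_cast hMk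
    rw [coeff_polarDeriv, coeff_eq_zero_of_natDegree_lt (n := k + 1) (by omega)]
    rcases hk.eq_or_lt with rfl | hk
    · simp
    · simp [coeff_eq_zero_of_natDegree_lt (hP ▸ hk : P.natDegree < k)]
  · have hlead : P.coeff (M + 1) = P.leadingCoeff := by rw [leadingCoeff, hP]
    have hnext : P.coeff M = -P.leadingCoeff * P.roots.sum := by
      rw [← (IsAlgClosed.splits P).nextCoeff_eq_neg_sum_roots_mul_leadingCoeff,
        nextCoeff_of_natDegree_pos (by omega), hP, Nat.add_sub_cancel]
    have hcard : Multiset.card P.roots = M + 1 := by rw [IsAlgClosed.card_roots_eq_natDegree, hP]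
    -- The vanishing of this coefficient would put `ζ` at the centroid of the roots.
    have hmean := (convex_circRegion hα β γ b).inv_card_smul_sum_mem
      (s := P.roots) (by simp [← Multiset.card_eq_zero, hcard])
      (fun z hz => hroots z (isRoot_of_mem_roots hz))
    intro h
    rw [coeff_polarDeriv, hnext, hlead] at h
    apply hζ
    convert hmean using 1
    rw [Complex.real_smul, Complex.ofReal_inv, Complex.ofReal_natCast, hcard,
      eq_inv_mul_iff_mul_eq₀ (Nat.cast_ne_zero.mpr M.succ_ne_zero)]
    have hlc : P.leadingCoeff ≠ 0 := leadingCoeff_ne_zero.mpr hP0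
    apply mul_left_cancel₀ hlc
    push_cast at h ⊢
    linear_combination h

theorem apol_comm (m : ℕ) (P Q : ℂ[X]) : apol m P Q = (-1) ^ m * apol m Q P := by
  rw [apol, apol, Finset.mul_sum, ← Finset.sum_range_reflect]
  refine Finset.sum_congr rfl fun k hk => ?_
  have hk : k ≤ m := Nat.lt_succ_iff.mp (Finset.mem_range.mp hk)
  rw [Nat.add_sub_cancel, Nat.sub_sub_self hk, Nat.choose_symm hk]
  have hsign : (-1 : ℂ) ^ (m - k) = (-1) ^ m * (-1) ^ k := by
    rw [← Nat.sub_add_cancel hk, pow_add, Nat.add_sub_cancel, mul_assoc, ← pow_add,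
      ← two_mul, pow_mul, neg_one_sq, one_pow, mul_one]
  rw [hsign]
  ring

theorem inv_succ_mul_inv_choose_mul_sub {M k : ℕ} (hk : k ≤ M) :
    ((M + 1 : ℕ) : ℂ)⁻¹ * (M.choose k : ℂ)⁻¹ * ((M + 1 : ℕ) - k) = ((M + 1).choose k : ℂ)⁻¹ := by
  have h : ((M.choose k * (M + 1) : ℕ) : ℂ) = ((M + 1).choose k * (M + 1 - k) : ℕ) :=
    congrArg _ (Nat.choose_mul_succ_eq M k)
  have h0 : (M.choose k : ℂ) ≠ 0 := Nat.cast_ne_zero.mpr (Nat.choose_pos hk).ne'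
  have h1 : ((M + 1).choose k : ℂ) ≠ 0 := Nat.cast_ne_zero.mpr (Nat.choose_pos (by omega)).ne'
  push_cast [Nat.cast_sub (show k ≤ M + 1 by omega)] at h ⊢
  field_simp
  linear_combination -h

theorem inv_succ_mul_inv_choose_mul_succ {M k : ℕ} (hk : k ≤ M) :
    ((M + 1 : ℕ) : ℂ)⁻¹ * (M.choose k : ℂ)⁻¹ * (k + 1) = ((M + 1).choose (k + 1) : ℂ)⁻¹ := by
  have h : (((M + 1) * M.choose k : ℕ) : ℂ) = ((M + 1).choose (k + 1) * (k + 1) : ℕ) :=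
    congrArg _ (Nat.add_one_mul_choose_eq M k)
  have h0 : (M.choose k : ℂ) ≠ 0 := Nat.cast_ne_zero.mpr (Nat.choose_pos hk).ne'
  have h1 : ((M + 1).choose (k + 1) : ℂ) ≠ 0 :=
    Nat.cast_ne_zero.mpr (Nat.choose_pos (by omega)).ne'
  push_cast at h ⊢
  field_simp
  linear_combination -h

theorem apol_X_sub_C_mul {M : ℕ} (P : ℂ[X]) (ζ : ℂ) {R : ℂ[X]} (hR : R.natDegree ≤ M) :
    apol (M + 1) P ((X - C ζ) * R) =
      ((M + 1 : ℕ) : ℂ)⁻¹ * apol M (polarDeriv (M + 1) ζ P) R := by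
  set A := ∑ k ∈ Finset.range (M + 1),
    (-1) ^ k * ((M + 1).choose k : ℂ)⁻¹ * P.coeff k * R.coeff (M - k)
  set B := ∑ k ∈ Finset.range (M + 1),
    (-1) ^ k * ((M + 1).choose (k + 1) : ℂ)⁻¹ * P.coeff (k + 1) * R.coeff (M - k)
  have hsplit : apol (M + 1) P ((X - C ζ) * R) = apol (M + 1) P (X * R) - ζ * apol (M + 1) P R := by
    rw [apol, apol, apol, Finset.mul_sum, ← Finset.sum_sub_distrib]
    refine Finset.sum_congr rfl fun k _ => ?_
    rw [sub_mul, coeff_sub, coeff_C_mul]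
    ring
  have hXR : apol (M + 1) P (X * R) = A := by
    rw [apol, Finset.sum_range_succ, Nat.sub_self, coeff_X_mul_zero, mul_zero, add_zero]
    refine Finset.sum_congr rfl fun k hk => ?_
    rw [show M + 1 - k = M - k + 1 by grind, coeff_X_mul]
  have hR : apol (M + 1) P R = -B := by
    rw [apol, Finset.sum_range_succ', Nat.sub_zero,
      coeff_eq_zero_of_natDegree_lt (Nat.lt_succ_of_le hR), mul_zero, add_zero,
      ← Finset.sum_neg_distrib]
    refine Finset.sum_congr rfl fun k _ => ?_
    rw [Nat.add_sub_add_right, pow_succ]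
    ring
  have hpolar : ((M + 1 : ℕ) : ℂ)⁻¹ * apol M (polarDeriv (M + 1) ζ P) R = A + ζ * B := by
    rw [apol, Finset.mul_sum, Finset.mul_sum, ← Finset.sum_add_distrib]
    refine Finset.sum_congr rfl fun k hk => ?_
    have hk : k ≤ M := Nat.lt_succ_iff.mp (Finset.mem_range.mp hk)
    rw [coeff_polarDeriv, ← inv_succ_mul_inv_choose_mul_sub hk,
      ← inv_succ_mul_inv_choose_mul_succ hk]
    ring
  rw [hsplit, hXR, hR, hpolar]
  ring

theorem apol_ne_zero_of_convex {α : ℝ} (hα : 0 ≤ α) (β : ℂ) (γ : ℝ) (b : Bool) :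
    ∀ (m : ℕ) {P Q : ℂ[X]}, P.degree = m → Q.degree = m →
      (∀ z, P.IsRoot z → z ∈ circRegion α β γ b) →
      (∀ z, Q.IsRoot z → z ∉ circRegion α β γ b) → apol m P Q ≠ 0
  | 0, P, Q, hP, hQ, _, _ => by
    simp [apol, coeff_ne_zero_of_eq_degree hP, coeff_ne_zero_of_eq_degree hQ]
  | M + 1, P, Q, hP, hQ, hPK, hQK => by
    obtain ⟨ζ, hζ⟩ := Complex.exists_root (by rw [hQ]; exact_mod_cast M.succ_pos)
    obtain ⟨R, rfl⟩ := dvd_iff_isRoot.mpr hζ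
    have hR : R.degree = M := by
      rw [degree_mul, degree_X_sub_C, add_comm, Nat.cast_succ] at hQ
      exact WithBot.add_right_cancel (by simp) hQ
    have hPn : P.natDegree = M + 1 := natDegree_eq_of_degree_eq_some hP
    have hζK := hQK ζ hζ
    rw [apol_X_sub_C_mul P ζ (natDegree_le_of_degree_le hR.le)]
    refine mul_ne_zero (inv_ne_zero (Nat.cast_ne_zero.mpr M.succ_ne_zero)) ?_
    refine apol_ne_zero_of_convex hα β γ b M (degree_polarDeriv hα hPn hPK hζK) hR ?_ ?_
    · exact fun w hw => mem_circRegion_of_isRoot_polarDeriv (by omega) hPK hζK (hPn ▸ hw)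
    · exact fun z hz => hQK z (by simp [hz.eq_zero])

theorem apol_ne_zero_of_circRegion {α : ℝ} {β : ℂ} {γ : ℝ} {b : Bool} {m : ℕ} {P Q : ℂ[X]}
    (hP : P.degree = m) (hQ : Q.degree = m) (hPK : ∀ z, P.IsRoot z → z ∈ circRegion α β γ b)
    (hQK : ∀ z, Q.IsRoot z → z ∉ circRegion α β γ b) : apol m P Q ≠ 0 := by
  rcases le_or_gt 0 α with hα | hα
  · exact apol_ne_zero_of_convex hα β γ b m hP hQ hPK hQK
  · rw [apol_comm]
    refine mul_ne_zero (pow_ne_zero m (neg_ne_zero.mpr one_ne_zero)) ?_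
    refine apol_ne_zero_of_convex (neg_nonneg.mpr hα.le) (-β) (-γ) (!b) m hQ hP ?_ ?_
    · exact fun z hz => compl_circRegion α β γ b ▸ hQK z hz
    · exact fun z hz hzK => (compl_circRegion α β γ b ▸ hzK) (hPK z hz)

theorem Sfun_ne_zero {D : Set ℂ} (hD : IsCircularDomain D) {q f : ℂ[X]} (hq : 0 < q.natDegree)
    (hf : 0 < f.natDegree) (hnv : ∀ z ∈ D, f.eval (q.eval z) ≠ 0) {u : Fin f.natDegree → ℂ}
    (hu : ∀ k, u k ∈ innerImage q D) : Sfun q f.natDegree f u ≠ 0 := by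
  obtain ⟨α, β, γ, b, rfl⟩ := hD.exists_eq_circRegion
  have hpos : 0 < f.natDegree * q.natDegree := Nat.mul_pos hf hq
  have hfac : ∀ j, (q - C (u j)).natDegree = q.natDegree := fun j => natDegree_sub_C
  -- Grace's theorem for the complement of `D`, which contains the zeros of `f ∘ q`.
  refine apol_ne_zero_of_circRegion (α := -α) (β := -β) (γ := -γ) (b := !b) ?_ ?_ ?_ ?_
  · rw [degree_eq_iff_natDegree_eq_of_pos hpos, natDegree_comp]
  · rw [degree_eq_iff_natDegree_eq_of_pos hpos,
      natDegree_prod _ _ fun j _ => ne_zero_of_natDegree_gt (hfac j ▸ hq)]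
    simp [hfac]
  · intro z hz
    rw [← compl_circRegion]
    exact fun hzD => hnv z hzD (by rwa [IsRoot.def, eval_comp] at hz)
  · intro z hz
    rw [← compl_circRegion, Set.notMem_compl_iff]
    have hz := hz.eq_zero
    rw [eval_prod, Finset.prod_eq_zero_iff] at hz
    obtain ⟨j, -, hj⟩ := hz
    exact hu j z (sub_eq_zero.mp (by simpa using hj))

theorem stmt_11_general (D : Set ℂ) (hD : IsCircularDomain D)
    (d : ℕ) (hd : 1 ≤ d) (q : Polynomial ℂ) (hqd : q.natDegree = d)
    (n : ℕ) (hn : 1 ≤ n)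
    (f : Polynomial ℂ) (hf : f.natDegree = n)
    (hnv : ∀ u ∈ (fun w => q.eval w) '' D, f.eval u ≠ 0)
    (T : Polynomial ℂ)
    (hT : ∀ u : ℂ, T.eval u = apol (n * d) (f.comp q) ((q - Polynomial.C u) ^ n)) :
    (∀ z ∈ innerImage q D, T.eval z ≠ 0) ∧
    (∀ u : Fin n → ℂ, (∀ k, u k ∈ innerImage q D) → Sfun q n f u ≠ 0) := by
  subst hf hqd
  have hS : ∀ u : Fin f.natDegree → ℂ, (∀ k, u k ∈ innerImage q D) → Sfun q f.natDegree f u ≠ 0 :=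
    fun u hu => Sfun_ne_zero hD hd hn (fun z hz => hnv _ ⟨z, hz, rfl⟩) hu
  refine ⟨fun z hz => ?_, hS⟩
  have h := hS (fun _ => z) (fun _ => hz)
  rwa [Sfun, Finset.prod_const, Finset.card_univ, Fintype.card_fin, ← hT] at h

/-- Generalized Walsh theorem, part 2. -/
theorem stmt_11 (D : Set ℂ) (hD : IsCircularDomain D)
    (d : ℕ) (hd : 1 ≤ d) (q : Polynomial ℂ) (hq : q.Monic) (hqd : q.natDegree = d)
    (n : ℕ) (hn : 1 ≤ n)
    (f : Polynomial ℂ) (hf : f.natDegree = n)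
    (hnv : ∀ u ∈ (fun w => q.eval w) '' D, f.eval u ≠ 0)
    (T : Polynomial ℂ) (hTdeg : T.degree ≤ (n : ℕ))
    (hT : ∀ u : ℂ, T.eval u = apol (n * d) (f.comp q) ((q - Polynomial.C u) ^ n)) :
    (∀ z ∈ innerImage q D, T.eval z ≠ 0) ∧
    (∀ u : Fin n → ℂ, (∀ k, u k ∈ innerImage q D) → Sfun q n f u ≠ 0) :=
  stmt_11_general D hD d hd q hqd n hn f hf hnv T hT
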